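/- arXiv:2501.05364 — 4 statements merged into one kernel-verified Lean document; each statement's English description precedes it below -/
import Mathlib

section
/- Let W and U be the sets of vertices of Q_n of the form 0^j 1^(n-j) and 1^j 0^(n-j) respectively (for 0 ≤ j ≤ n). Then for any two vertices x, y in W ∪ U, the Hamming distance between x and y equals their distance along the cyclic ordering of W ∪ U as a 2n-cycle; in particular W ∪ U is a closed set of Q_n of size 2n. -/
/-- The `k`-th vertex (for `k : Fin (2*n)`) of the canonical isometric `2n`-cycle in the
hypercube `Q_n`: for `0 ≤ k ≤ n` the string `1^k 0^(n-k)` (i.e. first `k` bits one),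
and for `n < k < 2n` the string `0^(k-n) 1^(n-(k-n))` (first `k-n` bits zero, rest one).
These are exactly the vertices of the form `0^j 1^(n-j)` and `1^j 0^(n-j)`. -/
def ringVert (n : ℕ) (k : Fin (2 * n)) : Fin n → Bool :=
  fun i => if k.val ≤ n then decide (i.val < k.val) else decide (k.val - n ≤ i.val)

/-- A nonempty set `S` of vertices of the hypercube `Q_n` (whose graph distance is
Hamming distance) is *closed* if for every `u ∈ S` and every vertex `v` there is
`x ∈ S` with `dist(u,v) = dist(u,x)`. -/
def QClosed (n : ℕ) (S : Set (Fin n → Bool)) : Prop :=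
  S.Nonempty ∧ ∀ u ∈ S, ∀ v : Fin n → Bool, ∃ x ∈ S, hammingDist u v = hammingDist u x

lemma mod_two_helper (m x : ℕ) (h : x < 2 * m) :
    x % m = if x < m then x else x - m := by
  split
  · exact Nat.mod_eq_of_lt ‹_›
  · rw [Nat.mod_eq_sub_mod (by omega), Nat.mod_eq_of_lt (by omega)]

open Finset in
lemma card_band (n a b : ℕ) (hb : b ≤ n) :
    (univ.filter fun i : Fin n => a ≤ i.val ∧ i.val < b).card = b - a := by
  rw [← Nat.card_Ico a b]
  apply Finset.card_bij (fun i _ => i.val)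
  · intro i hi
    simp only [mem_filter] at hi
    exact mem_Ico.mpr hi.2
  · intro i _ j _ h
    exact Fin.ext h
  · intro j hj
    have hj' := mem_Ico.mp hj
    exact ⟨⟨j, lt_of_lt_of_le hj'.2 hb⟩, by simp [mem_filter, hj'.1, hj'.2], rfl⟩

open Finset in
lemma ham_lt_lt (n a b : ℕ) (ha : a ≤ n) (hb : b ≤ n) :
    hammingDist (fun i : Fin n => decide (i.val < a)) (fun i : Fin n => decide (i.val < b))
      = max a b - min a b := by
  unfold hammingDist
  rw [show (univ.filter fun i : Fin n =>
        (fun i : Fin n => decide (i.val < a)) i ≠ (fun i : Fin n => decide (i.val < b)) i)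
      = univ.filter fun i : Fin n => min a b ≤ i.val ∧ i.val < max a b from
    Finset.filter_congr (by intro i _; simp only [ne_eq, decide_eq_decide]; omega)]
  exact card_band n _ _ (by omega)

open Finset in
lemma ham_ge_ge (n a b : ℕ) (ha : a ≤ n) (hb : b ≤ n) :
    hammingDist (fun i : Fin n => decide (a ≤ i.val)) (fun i : Fin n => decide (b ≤ i.val))
      = max a b - min a b := by
  unfold hammingDist
  rw [show (univ.filter fun i : Fin n =>
        (fun i : Fin n => decide (a ≤ i.val)) i ≠ (fun i : Fin n => decide (b ≤ i.val)) i)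
      = univ.filter fun i : Fin n => min a b ≤ i.val ∧ i.val < max a b from
    Finset.filter_congr (by intro i _; simp only [ne_eq, decide_eq_decide]; omega)]
  exact card_band n _ _ (by omega)

open Finset in
lemma ham_cross (n a c : ℕ) (ha : a ≤ n) (hc : c ≤ n) :
    hammingDist (fun i : Fin n => decide (i.val < a)) (fun i : Fin n => decide (c ≤ i.val))
      = n - (max a c - min a c) := by
  unfold hammingDist
  rw [show (univ.filter fun i : Fin n =>
        (fun i : Fin n => decide (i.val < a)) i ≠ (fun i : Fin n => decide (c ≤ i.val)) i)
      = univ.filter fun i : Fin n => ¬ (min a c ≤ i.val ∧ i.val < max a c) from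
    Finset.filter_congr (by intro i _; simp only [ne_eq, decide_eq_decide]; omega)]
  have h1 := Finset.card_filter_add_card_filter_not
    (s := (univ : Finset (Fin n))) (p := fun i : Fin n => min a c ≤ i.val ∧ i.val < max a c)
  have h2 := card_band n (min a c) (max a c) (by omega)
  have h3 : (univ : Finset (Fin n)).card = n := by simp
  omega

lemma ring_dist (n : ℕ) (hn : 1 ≤ n) (k l : Fin (2 * n)) :
    hammingDist (ringVert n k) (ringVert n l) =
      min (((k : ℕ) + 2 * n - (l : ℕ)) % (2 * n)) (((l : ℕ) + 2 * n - (k : ℕ)) % (2 * n)) := by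
  have hk := k.isLt; have hl := l.isLt
  rw [mod_two_helper _ _ (by omega), mod_two_helper _ _ (by omega)]
  unfold ringVert
  by_cases h1 : (k : ℕ) ≤ n <;> by_cases h2 : (l : ℕ) ≤ n
  · simp only [if_pos h1, if_pos h2]
    rw [ham_lt_lt n _ _ h1 h2]
    split_ifs <;> omega
  · simp only [if_pos h1, if_neg h2]
    rw [ham_cross n (k : ℕ) ((l : ℕ) - n) h1 (by omega)]
    split_ifs <;> omega
  · simp only [if_neg h1, if_pos h2]
    rw [hammingDist_comm, ham_cross n (l : ℕ) ((k : ℕ) - n) h2 (by omega)]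
    split_ifs <;> omega
  · simp only [if_neg h1, if_neg h2]
    rw [ham_ge_ge n _ _ (by omega) (by omega)]
    split_ifs <;> omega

theorem ring_isometric_cycle_closed (n : ℕ) (hn : 1 ≤ n) :
    (∀ k l : Fin (2 * n),
      hammingDist (ringVert n k) (ringVert n l) =
        min (((k : ℕ) + 2 * n - (l : ℕ)) % (2 * n)) (((l : ℕ) + 2 * n - (k : ℕ)) % (2 * n))) ∧
    QClosed n (Set.range (ringVert n)) ∧
    (Set.range (ringVert n)).ncard = 2 * n := by
  have hd := ring_dist n hn
  refine ⟨hd, ⟨⟨ringVert n ⟨0, by omega⟩, Set.mem_range_self _⟩, ?_⟩, ?_⟩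
  · rintro u ⟨k, rfl⟩ v
    have hdv : hammingDist (ringVert n k) v ≤ n := by
      calc hammingDist (ringVert n k) v ≤ Fintype.card (Fin n) := hammingDist_le_card_fintype
        _ = n := Fintype.card_fin n
    set d := hammingDist (ringVert n k) v with hd'
    have hk := k.isLt
    refine ⟨ringVert n ⟨((k : ℕ) + d) % (2 * n), Nat.mod_lt _ (by omega)⟩,
      Set.mem_range_self _, ?_⟩
    rw [hd]
    have hL := mod_two_helper (2 * n) ((k : ℕ) + d) (by omega)
    set L := ((k : ℕ) + d) % (2 * n) with hLdef
    have hLlt : L < 2 * n := Nat.mod_lt _ (by omega)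
    show d = min (((k : ℕ) + 2 * n - L) % (2 * n)) ((L + 2 * n - (k : ℕ)) % (2 * n))
    rw [mod_two_helper _ _ (by omega), mod_two_helper _ _ (by omega)]
    split_ifs at hL ⊢ <;> omega
  · have hinj : Function.Injective (ringVert n) := by
      intro k l h
      have h0 : hammingDist (ringVert n k) (ringVert n l) = 0 := by
        rw [h, hammingDist_self]
      rw [hd] at h0
      have hk := k.isLt; have hl := l.isLt
      rw [mod_two_helper _ _ (by omega), mod_two_helper _ _ (by omega)] at h0
      apply Fin.ext
      split_ifs at h0 <;> omega
    have : Set.range (ringVert n) = ↑(Finset.univ.image (ringVert n)) := by simp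
    rw [this, Set.ncard_coe_finset, Finset.card_image_of_injective _ hinj,
      Finset.card_univ, Fintype.card_fin]
end

section
/- If U is a closed set of a graph G and u ∈ U, then |U| ≥ ecc(u) + 1, where ecc(u) is the eccentricity of u in G. -/
/-- A nonempty set `U` of vertices of a graph `G` is *closed* if for every `u ∈ U`
and every vertex `v` there is `x ∈ U` with `dist(u,v) = dist(u,x)`. -/
def ClosedSet {V : Type*} (G : SimpleGraph V) (U : Finset V) : Prop :=
  U.Nonempty ∧ ∀ u ∈ U, ∀ v : V, ∃ x ∈ U, G.dist u v = G.dist u x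

lemma dist_getVert_le {V : Type*} {G : SimpleGraph V} (hG : G.Connected) :
    ∀ {u w : V} (p : G.Walk u w) (d : ℕ), G.dist u (p.getVert d) ≤ d := by
  intro u w p
  induction p with
  | nil => intro d; cases d <;> simp [SimpleGraph.Walk.getVert, SimpleGraph.dist_self]
  | @cons a b c h q ih =>
    intro d
    cases d with
    | zero => simp [SimpleGraph.Walk.getVert]
    | succ n =>
      rw [SimpleGraph.Walk.getVert_cons_succ]
      calc G.dist a (q.getVert n) ≤ G.dist a b + G.dist b (q.getVert n) :=
            hG.dist_triangle
        _ ≤ 1 + n := by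
            have h1 : G.dist a b ≤ 1 := by
              rw [SimpleGraph.dist_eq_one_iff_adj.mpr h]
            exact Nat.add_le_add h1 (ih n)
        _ = n + 1 := Nat.add_comm 1 n

lemma exists_dist_eq' {V : Type*} {G : SimpleGraph V} (hG : G.Connected)
    (u w : V) (d : ℕ) (hd : d ≤ G.dist u w) : ∃ x, G.dist u x = d := by
  obtain ⟨p, hp⟩ := (hG u w).exists_walk_length_eq_dist
  refine ⟨p.getVert d, le_antisymm (dist_getVert_le hG p d) ?_⟩
  have hdl : d ≤ p.length := hp ▸ hd
  have hrev : p.reverse.getVert (p.length - d) = p.getVert d := by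
    rw [SimpleGraph.Walk.getVert_reverse, Nat.sub_sub_self hdl]
  have h2 : G.dist w (p.getVert d) ≤ p.length - d := by
    have := dist_getVert_le hG p.reverse (p.length - d)
    rwa [hrev] at this
  have h3 : G.dist u w ≤ G.dist u (p.getVert d) + G.dist (p.getVert d) w :=
    hG.dist_triangle
  rw [SimpleGraph.dist_comm] at h2
  rw [← hp] at h3
  omega

theorem closed_card_ge_ecc {V : Type*} [Fintype V] (G : SimpleGraph V)
    (hG : G.Connected) (U : Finset V) (hU : ClosedSet G U) (u : V) (hu : u ∈ U) :
    Finset.univ.sup (fun v => G.dist u v) + 1 ≤ U.card := by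
  have hsub : Finset.range (Finset.univ.sup (fun v => G.dist u v) + 1) ⊆
      U.image (fun x => G.dist u x) := by
    intro d hd
    rw [Finset.mem_range, Nat.lt_succ_iff] at hd
    have : Nonempty V := ⟨u⟩
    obtain ⟨w, -, hw⟩ := Finset.exists_mem_eq_sup Finset.univ
      Finset.univ_nonempty (fun v => G.dist u v)
    obtain ⟨v, hv⟩ := exists_dist_eq' hG u w d (by rw [← hw]; exact hd)
    obtain ⟨x, hx, hxd⟩ := hU.2 u hu v
    exact Finset.mem_image.mpr ⟨x, hx, by rw [← hxd, hv]⟩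
  calc Finset.univ.sup (fun v => G.dist u v) + 1
      = (Finset.range (Finset.univ.sup (fun v => G.dist u v) + 1)).card := by
        rw [Finset.card_range]
    _ ≤ (U.image (fun x => G.dist u x)).card := Finset.card_le_card hsub
    _ ≤ U.card := Finset.card_image_le
end

section
/- Let G be a bipanpositionable graph with at least 4 vertices. Then every vertex of G lies on a 4-cycle of G. -/
/-- A Hamiltonian bipartite graph `G` is *bipanpositionable* if for any two distinct
vertices `x, y` and any `k` with `dist(x,y) ≤ k ≤ |V(G)|/2` and `k - dist(x,y)` even,
some Hamiltonian cycle `C` of `G` has `dist_C(x,y) = k`; here such a Hamiltonian cycle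
is encoded by its two arcs between `x` and `y`: internally disjoint paths of lengths
`k` and `|V(G)| - k` which together cover all vertices. -/
def Bipanpositionable {V : Type*} [Fintype V] [DecidableEq V] (G : SimpleGraph V) : Prop :=
  G.Colorable 2 ∧ (∃ (a : V) (C : G.Walk a a), C.IsHamiltonianCycle) ∧
  ∀ x y : V, x ≠ y → ∀ k : ℕ, G.dist x y ≤ k → 2 * k ≤ Fintype.card V →
    Even (k - G.dist x y) →
    ∃ p q : G.Walk x y, p.IsPath ∧ q.IsPath ∧
      p.length = k ∧ q.length = Fintype.card V - k ∧
      (∀ v : V, v ∈ p.support ∨ v ∈ q.support) ∧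
      (∀ v : V, v ∈ p.support → v ∈ q.support → v = x ∨ v = y)

/-!
Take a neighbour `b` of `a` (a Hamiltonian graph on at least two vertices is connected). Since
`dist(a, b) = 1`, bipanpositionability yields a Hamiltonian cycle whose arcs between `a` and `b`
have lengths `3` and `n - 3` when `n ≥ 6`, or `1` and `3` when `n = 4` (`n` is even, the graph
being bipartite with a Hamiltonian cycle). Either way there is a path of length `3` from `b` to
`a`, which closes up with the edge `ab` to a `4`-cycle through `a`.
-/

namespace SimpleGraph

variable {V : Type*} {G : SimpleGraph V}

theorem Walk.IsPath.cons_isCycle_of_length_ne_one {u v : V} {p : G.Walk v u} (hp : p.IsPath)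
    (h : G.Adj u v) (hl : p.length ≠ 1) : (Walk.cons h p).IsCycle :=
  (Walk.cons_isCycle_iff p h).mpr
    ⟨hp, fun he ↦ hl (hp.length_eq_one_of_mem_edges (Sym2.eq_swap ▸ he))⟩

end SimpleGraph

namespace Bipanpositionable

open SimpleGraph

variable {V : Type*} [Fintype V] [DecidableEq V] {G : SimpleGraph V}

theorem even_card (hG : Bipanpositionable G) : Even (Fintype.card V) := by
  obtain ⟨hcol, ⟨c, C, hC⟩, -⟩ := hG
  rw [← hC.length_eq]
  exact two_colorable_iff_forall_loop_even.mp hcol c C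

theorem exists_adj (hG : Bipanpositionable G) [Nontrivial V] (a : V) : ∃ b, G.Adj a b := by
  obtain ⟨-, hham, -⟩ := hG
  have hG' : G.IsHamiltonian := fun _ ↦ hham
  exact hG'.connected.preconnected.exists_adj_of_nontrivial a

theorem exists_isPath_length_three_of_adj (hG : Bipanpositionable G)
    (h4 : 4 ≤ Fintype.card V) {x y : V} (hxy : G.Adj x y) :
    ∃ p : G.Walk x y, p.IsPath ∧ p.length = 3 := by
  have hdist : G.dist x y = 1 := dist_eq_one_iff_adj.mpr hxy
  obtain ⟨m, hm⟩ := hG.even_card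
  obtain ⟨-, -, hpan⟩ := hG
  rcases Nat.lt_or_ge (Fintype.card V) 6 with h6 | h6
  · obtain ⟨-, q, -, hq, -, hql, -, -⟩ :=
      hpan x y hxy.ne 1 (by omega) (by omega) (by simp [hdist])
    exact ⟨q, hq, by omega⟩
  · obtain ⟨p, -, hp, -, hpl, -, -, -⟩ :=
      hpan x y hxy.ne 3 (by omega) (by omega) (by rw [hdist]; decide)
    exact ⟨p, hp, hpl⟩

end Bipanpositionable

theorem bipanpositionable_four_cycle {V : Type*} [Fintype V] [DecidableEq V]
    (G : SimpleGraph V) (hG : Bipanpositionable G) (h4 : 4 ≤ Fintype.card V) (a : V) :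
    ∃ C : G.Walk a a, C.IsCycle ∧ C.length = 4 := by
  have : Nontrivial V := Fintype.one_lt_card_iff_nontrivial.mp (by omega)
  obtain ⟨b, hab⟩ := hG.exists_adj a
  obtain ⟨p, hp, hp3⟩ := hG.exists_isPath_length_three_of_adj h4 hab.symm
  exact ⟨.cons hab p, hp.cons_isCycle_of_length_ne_one hab (by omega), by simp [hp3]⟩
end

section
/- In the cuttlefish graph CF_n with n odd, for every vertex u_i with 3 ≤ i ≤ (n+1)/2, the unique vertex at distance ecc(u_i) from u_i is the leaf v_{⌊n/2⌋−1}; and for (n+5)/2 ≤ i ≤ n, the unique vertex at distance ecc(u_i) from u_i is the leaf w_{⌊n/2⌋−1}. -/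
/-- Vertices of the cuttlefish graph `CF_n`: `Sum.inl i` is the cycle vertex
`u_{i+1}` (for `i : Fin n`), `Sum.inr (Sum.inl j)` is the path vertex `v_{j+1}` and
`Sum.inr (Sum.inr j)` is the path vertex `w_{j+1}` (for `j : Fin (n/2 - 1)`). -/
abbrev CFV (n : ℕ) := Fin n ⊕ (Fin (n / 2 - 1) ⊕ Fin (n / 2 - 1))

/-- The generating relation for the edges of `CF_n`: cycle edges `u_i u_{i+1 mod n}`,
pendant edges `u_1 v_1` and `u_2 w_1`, and path edges `v_j v_{j+1}`, `w_j w_{j+1}`. -/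
def cfRel (n : ℕ) : CFV n → CFV n → Prop
  | Sum.inl i, Sum.inl j => (i.val + 1) % n = j.val
  | Sum.inl i, Sum.inr (Sum.inl j) => i.val = 0 ∧ j.val = 0
  | Sum.inl i, Sum.inr (Sum.inr j) => i.val = 1 ∧ j.val = 0
  | Sum.inr (Sum.inl i), Sum.inr (Sum.inl j) => j.val = i.val + 1
  | Sum.inr (Sum.inr i), Sum.inr (Sum.inr j) => j.val = i.val + 1
  | _, _ => False

/-- The cuttlefish graph `CF_n`. -/
def CF (n : ℕ) : SimpleGraph (CFV n) := SimpleGraph.fromRel (cfRel n)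

/-- The eccentricity of a vertex of `CF_n`: the maximum distance to any vertex. -/
noncomputable def eccCF (n : ℕ) (u : CFV n) : ℕ :=
  Finset.univ.sup fun x => (CF n).dist u x

-- generic Lipschitz lower bound
lemma lip_walk {V : Type*} {G : SimpleGraph V} (f : V → ℤ)
    (hf : ∀ x y, G.Adj x y → f y ≤ f x + 1) :
    ∀ {u v : V} (p : G.Walk u v), f v ≤ f u + p.length := by
  intro u v p
  induction p with
  | nil => simp
  | cons h p ih =>
    have := hf _ _ h
    simp only [SimpleGraph.Walk.length_cons]
    push_cast
    omega

lemma lip_dist {V : Type*} {G : SimpleGraph V} (f : V → ℤ)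
    (hf : ∀ x y, G.Adj x y → f y ≤ f x + 1) {u v : V} (h : G.Reachable u v) :
    f v ≤ f u + G.dist u v := by
  obtain ⟨p, hp⟩ := h.exists_walk_length_eq_dist
  simpa [hp] using lip_walk f hf p

section CFfacts
variable {n : ℕ} (hn : 5 ≤ n)

lemma cf_adj_of_rel {x y : CFV n} (hne : x ≠ y) (h : cfRel n x y) : (CF n).Adj x y :=
  (SimpleGraph.fromRel_adj _ _ _).2 ⟨hne, Or.inl h⟩

include hn in
lemma cf_adj_cycle (a : Fin n) :
    (CF n).Adj (Sum.inl a) (Sum.inl ⟨(a.val + 1) % n, Nat.mod_lt _ (by omega)⟩) := by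
  apply cf_adj_of_rel
  · intro h
    have := Sum.inl.inj h
    have h2 : a.val = (a.val + 1) % n := congrArg Fin.val this
    have := a.isLt
    rcases Nat.lt_or_ge (a.val + 1) n with h'|h'
    · rw [Nat.mod_eq_of_lt h'] at h2; omega
    · have : a.val + 1 = n := by omega
      rw [this, Nat.mod_self] at h2; omega
  · rfl

include hn in
lemma cf_adj_v0 : (CF n).Adj (Sum.inl (⟨0, by omega⟩ : Fin n))
    (Sum.inr (Sum.inl (⟨0, by omega⟩ : Fin (n / 2 - 1)))) := by
  exact cf_adj_of_rel (by simp) (show (0:ℕ) = 0 ∧ (0:ℕ) = 0 from ⟨rfl, rfl⟩)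

include hn in
lemma cf_adj_w0 : (CF n).Adj (Sum.inl (⟨1, by omega⟩ : Fin n))
    (Sum.inr (Sum.inr (⟨0, by omega⟩ : Fin (n / 2 - 1)))) := by
  exact cf_adj_of_rel (by simp) (show (1:ℕ) = 1 ∧ (0:ℕ) = 0 from ⟨rfl, rfl⟩)

lemma cf_adj_v (k : ℕ) (hk : k + 1 < n / 2 - 1) :
    (CF n).Adj (Sum.inr (Sum.inl (⟨k, by omega⟩ : Fin (n / 2 - 1))))
      (Sum.inr (Sum.inl (⟨k + 1, hk⟩ : Fin (n / 2 - 1)))) := by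
  apply cf_adj_of_rel
  · simp [Fin.ext_iff]
  · rfl

lemma cf_adj_w (k : ℕ) (hk : k + 1 < n / 2 - 1) :
    (CF n).Adj (Sum.inr (Sum.inr (⟨k, by omega⟩ : Fin (n / 2 - 1))))
      (Sum.inr (Sum.inr (⟨k + 1, hk⟩ : Fin (n / 2 - 1)))) := by
  apply cf_adj_of_rel
  · simp [Fin.ext_iff]
  · rfl

include hn in
lemma cf_reach_cycle (a : Fin n) (k : ℕ) :
    (CF n).Reachable (Sum.inl a) (Sum.inl ⟨(a.val + k) % n, Nat.mod_lt _ (by omega)⟩) := by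
  induction k with
  | zero =>
    have : (⟨(a.val + 0) % n, Nat.mod_lt _ (by omega)⟩ : Fin n) = a := by
      simp [Fin.ext_iff, Nat.mod_eq_of_lt a.isLt]
    rw [this]
  | succ k ih =>
    refine ih.trans ?_
    have h := (cf_adj_cycle hn (⟨(a.val + k) % n, Nat.mod_lt _ (by omega)⟩ : Fin n)).reachable
    convert h using 2
    simp only [Fin.ext_iff]
    show (a.val + (k + 1)) % n = ((a.val + k) % n + 1) % n
    rw [Nat.mod_add_mod, Nat.add_assoc]

include hn in
lemma cf_reach_to_cycle (a c : Fin n) : (CF n).Reachable (Sum.inl a) (Sum.inl c) := by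
  have h := cf_reach_cycle hn a (c.val + n - a.val)
  convert h using 2
  simp only [Fin.ext_iff]
  have := a.isLt; have := c.isLt
  show c.val = (a.val + (c.val + n - a.val)) % n
  have h1 : a.val + (c.val + n - a.val) = c.val + n := by omega
  rw [h1, Nat.add_mod_right, Nat.mod_eq_of_lt c.isLt]

include hn in
lemma cf_reach_v (k : ℕ) (hk : k < n / 2 - 1) :
    (CF n).Reachable (Sum.inl (⟨0, by omega⟩ : Fin n)) (Sum.inr (Sum.inl (⟨k, hk⟩ : Fin (n / 2 - 1)))) := by
  induction k with
  | zero => exact (cf_adj_v0 hn).reachable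
  | succ k ih => exact (ih (by omega)).trans (cf_adj_v k hk).reachable

include hn in
lemma cf_reach_w (k : ℕ) (hk : k < n / 2 - 1) :
    (CF n).Reachable (Sum.inl (⟨1, by omega⟩ : Fin n)) (Sum.inr (Sum.inr (⟨k, hk⟩ : Fin (n / 2 - 1)))) := by
  induction k with
  | zero => exact (cf_adj_w0 hn).reachable
  | succ k ih => exact (ih (by omega)).trans (cf_adj_w k hk).reachable

include hn in
lemma cf_connected : (CF n).Connected := by
  rw [SimpleGraph.connected_iff]
  refine ⟨fun x y => ?_, ⟨Sum.inl ⟨0, by omega⟩⟩⟩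
  have key : ∀ z : CFV n, (CF n).Reachable (Sum.inl (⟨0, by omega⟩ : Fin n)) z := by
    rintro (c | b | b)
    · exact cf_reach_to_cycle hn _ c
    · exact cf_reach_v hn b.val b.isLt
    · exact ((cf_reach_to_cycle hn ⟨0, by omega⟩ ⟨1, by omega⟩)).trans (cf_reach_w hn b.val b.isLt)
  exact (key x).symm.trans (key y)

omit hn in
lemma cf_dist_adj {x y : CFV n} (h : (CF n).Adj x y) : (CF n).dist x y ≤ 1 := by
  simpa using SimpleGraph.dist_le h.toWalk

include hn in
lemma cf_dist_cycle (a : Fin n) (k : ℕ) :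
    (CF n).dist (Sum.inl a) (Sum.inl ⟨(a.val + k) % n, Nat.mod_lt _ (by omega)⟩) ≤ k := by
  induction k with
  | zero =>
    have : (⟨(a.val + 0) % n, Nat.mod_lt _ (by omega)⟩ : Fin n) = a := by
      simp [Fin.ext_iff, Nat.mod_eq_of_lt a.isLt]
    rw [this, SimpleGraph.dist_self]
  | succ k ih =>
    have h := cf_adj_cycle hn (⟨(a.val + k) % n, Nat.mod_lt _ (by omega)⟩ : Fin n)
    have heq : (⟨(a.val + (k + 1)) % n, Nat.mod_lt _ (by omega)⟩ : Fin n)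
        = ⟨((a.val + k) % n + 1) % n, Nat.mod_lt _ (by omega)⟩ := by
      simp only [Fin.ext_iff]
      rw [Nat.mod_add_mod, Nat.add_assoc]
    rw [heq]
    calc (CF n).dist _ _ ≤ (CF n).dist (Sum.inl a) (Sum.inl ⟨(a.val + k) % n, Nat.mod_lt _ (by omega)⟩) + _ :=
          (cf_connected hn).dist_triangle
      _ ≤ k + 1 := by
          have := cf_dist_adj h
          simp only [Fin.val_mk] at this ⊢
          omega

include hn in
lemma cf_dist_cycle' (a c : Fin n) (k : ℕ) (hk : (a.val + k) % n = c.val) :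
    (CF n).dist (Sum.inl a) (Sum.inl c) ≤ k := by
  have h := cf_dist_cycle hn a k
  have : (⟨(a.val + k) % n, Nat.mod_lt _ (by omega)⟩ : Fin n) = c := by
    simp [Fin.ext_iff, hk]
  rwa [this] at h

include hn in
lemma cf_dist_v (k : ℕ) (hk : k < n / 2 - 1) :
    (CF n).dist (Sum.inl (⟨0, by omega⟩ : Fin n)) (Sum.inr (Sum.inl (⟨k, hk⟩ : Fin (n / 2 - 1)))) ≤ k + 1 := by
  induction k with
  | zero => exact cf_dist_adj (cf_adj_v0 hn)
  | succ k ih =>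
    calc (CF n).dist _ _ ≤ (CF n).dist (Sum.inl (⟨0, by omega⟩ : Fin n))
            (Sum.inr (Sum.inl (⟨k, by omega⟩ : Fin (n / 2 - 1)))) + _ := (cf_connected hn).dist_triangle
      _ ≤ (k + 1) + 1 := by
          have h1 := ih (by omega)
          have h2 := cf_dist_adj (cf_adj_v (n := n) k hk)
          omega

include hn in
lemma cf_dist_w (k : ℕ) (hk : k < n / 2 - 1) :
    (CF n).dist (Sum.inl (⟨1, by omega⟩ : Fin n)) (Sum.inr (Sum.inr (⟨k, hk⟩ : Fin (n / 2 - 1)))) ≤ k + 1 := by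
  induction k with
  | zero => exact cf_dist_adj (cf_adj_w0 hn)
  | succ k ih =>
    calc (CF n).dist _ _ ≤ (CF n).dist (Sum.inl (⟨1, by omega⟩ : Fin n))
            (Sum.inr (Sum.inr (⟨k, by omega⟩ : Fin (n / 2 - 1)))) + _ := (cf_connected hn).dist_triangle
      _ ≤ (k + 1) + 1 := by
          have h1 := ih (by omega)
          have h2 := cf_dist_adj (cf_adj_w (n := n) k hk)
          omega

end CFfacts

def pot1 (n : ℕ) : CFV n → ℤ
  | Sum.inl c => ((min c.val (n - c.val) : ℕ) : ℤ) + ((n / 2 : ℕ) : ℤ) - 1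
  | Sum.inr (Sum.inl b) => ((n / 2 : ℕ) : ℤ) - 2 - b.val
  | Sum.inr (Sum.inr b) => ((n / 2 : ℕ) : ℤ) + b.val + 1

def pot2 (n : ℕ) : CFV n → ℤ
  | Sum.inl c => (if c.val = 0 then 1 else ((min (c.val - 1) (n + 1 - c.val) : ℕ) : ℤ))
      + ((n / 2 : ℕ) : ℤ) - 1
  | Sum.inr (Sum.inl b) => ((n / 2 : ℕ) : ℤ) + b.val + 1
  | Sum.inr (Sum.inr b) => ((n / 2 : ℕ) : ℤ) - 2 - b.val

section Pot
variable {n : ℕ} (hn : 5 ≤ n)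

include hn in
lemma pot1_lip : ∀ x y : CFV n, (CF n).Adj x y → pot1 n y ≤ pot1 n x + 1 := by
  have key : ∀ x y, cfRel n x y → pot1 n y ≤ pot1 n x + 1 ∧ pot1 n x ≤ pot1 n y + 1 := by
    rintro (c | b | b) (c' | b' | b') h <;> simp only [cfRel] at h
    · have hc := c.isLt; have hc' := c'.isLt
      rcases Nat.lt_or_ge (c.val + 1) n with h' | h'
      · rw [Nat.mod_eq_of_lt h'] at h
        simp only [pot1]; omega
      · have he : c.val + 1 = n := by omega
        rw [he, Nat.mod_self] at h
        simp only [pot1]; omega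
    · obtain ⟨h1, h2⟩ := h; simp only [pot1]; omega
    · obtain ⟨h1, h2⟩ := h; simp only [pot1]; omega
    · simp only [pot1]; omega
    · simp only [pot1]; omega
  intro x y hadj
  simp only [CF, SimpleGraph.fromRel_adj] at hadj
  rcases hadj.2 with h | h
  · exact (key _ _ h).1
  · exact (key _ _ h).2

include hn in
lemma pot2_lip : ∀ x y : CFV n, (CF n).Adj x y → pot2 n y ≤ pot2 n x + 1 := by
  have key : ∀ x y, cfRel n x y → pot2 n y ≤ pot2 n x + 1 ∧ pot2 n x ≤ pot2 n y + 1 := by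
    rintro (c | b | b) (c' | b' | b') h <;> simp only [cfRel] at h
    · have hc := c.isLt; have hc' := c'.isLt
      rcases Nat.lt_or_ge (c.val + 1) n with h' | h'
      · rw [Nat.mod_eq_of_lt h'] at h
        simp only [pot2]; split_ifs <;> omega
      · have he : c.val + 1 = n := by omega
        rw [he, Nat.mod_self] at h
        simp only [pot2]; split_ifs <;> omega
    · obtain ⟨h1, h2⟩ := h; simp only [pot2]; split_ifs <;> omega
    · obtain ⟨h1, h2⟩ := h; simp only [pot2]; split_ifs <;> omega
    · simp only [pot2]; omega
    · simp only [pot2]; omega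
  intro x y hadj
  simp only [CF, SimpleGraph.fromRel_adj] at hadj
  rcases hadj.2 with h | h
  · exact (key _ _ h).1
  · exact (key _ _ h).2

include hn in
lemma cf_dist_half (a c : Fin n) : (CF n).dist (Sum.inl a) (Sum.inl c) ≤ n / 2 := by
  have ha := a.isLt; have hc := c.isLt
  rcases le_or_gt a.val c.val with h | h
  · rcases le_or_gt (c.val - a.val) (n / 2) with h2 | h2
    · refine le_trans (cf_dist_cycle' hn a c (c.val - a.val) ?_) (by omega)
      rw [Nat.mod_eq_of_lt (by omega)]; omega
    · rw [SimpleGraph.dist_comm]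
      refine le_trans (cf_dist_cycle' hn c a (a.val + n - c.val) ?_) (by omega)
      have h1 : c.val + (a.val + n - c.val) = a.val + n := by omega
      rw [h1, Nat.add_mod_right, Nat.mod_eq_of_lt ha]
  · rcases le_or_gt (a.val - c.val) (n / 2) with h2 | h2
    · rw [SimpleGraph.dist_comm]
      refine le_trans (cf_dist_cycle' hn c a (a.val - c.val) ?_) (by omega)
      rw [Nat.mod_eq_of_lt (by omega)]; omega
    · refine le_trans (cf_dist_cycle' hn a c (c.val + n - a.val) ?_) (by omega)
      have h1 : a.val + (c.val + n - a.val) = c.val + n := by omega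
      rw [h1, Nat.add_mod_right, Nat.mod_eq_of_lt hc]

end Pot


set_option maxHeartbeats 1000000 in
theorem cuttlefish_unique_ecc_vertex (n : ℕ) (hodd : Odd n) (hn : 5 ≤ n) :
    (∀ i : Fin n, 3 ≤ i.val + 1 → i.val + 1 ≤ (n + 1) / 2 →
      ∀ x : CFV n, (CF n).dist (Sum.inl i) x = eccCF n (Sum.inl i) ↔
        x = Sum.inr (Sum.inl ⟨n / 2 - 2, by omega⟩)) ∧
    (∀ i : Fin n, (n + 5) / 2 ≤ i.val + 1 →
      ∀ x : CFV n, (CF n).dist (Sum.inl i) x = eccCF n (Sum.inl i) ↔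
        x = Sum.inr (Sum.inr ⟨n / 2 - 2, by omega⟩)) := by
  obtain ⟨m, hm⟩ := hodd
  constructor
  · -- first half
    intro i h3 h5 x
    have hia := i.isLt
    have ham : 2 ≤ i.val ∧ i.val ≤ m := by omega
    set leaf : CFV n := Sum.inr (Sum.inl ⟨n / 2 - 2, by omega⟩) with hleafdef
    -- upper bounds
    have hub : ∀ y : CFV n, ((CF n).dist (Sum.inl i) y ≤ i.val + m - 1) ∧
        (y ≠ leaf → (CF n).dist (Sum.inl i) y ≤ i.val + m - 2) := by
      rintro (c | b | b)
      · have h := cf_dist_half hn i c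
        constructor <;> intros <;> omega
      · have hb := b.isLt
        have h0 : (CF n).dist (Sum.inl i) (Sum.inl (⟨0, by omega⟩ : Fin n)) ≤ i.val := by
          rw [SimpleGraph.dist_comm]
          refine cf_dist_cycle' hn _ i i.val ?_
          simpa using Nat.mod_eq_of_lt hia
        have hv := cf_dist_v hn b.val b.isLt
        rw [Fin.eta] at hv
        have htri : (CF n).dist (Sum.inl i) (Sum.inr (Sum.inl b)) ≤ i.val + (b.val + 1) :=
          le_trans ((cf_connected hn).dist_triangle (v := Sum.inl (⟨0, by omega⟩ : Fin n))) (by omega)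
        constructor
        · omega
        · intro hne
          have hbv : b.val ≠ n / 2 - 2 := by
            intro h; apply hne; rw [hleafdef]
            congr 1; congr 1; exact Fin.ext h
          omega
      · have hb := b.isLt
        have h1 : (CF n).dist (Sum.inl i) (Sum.inl (⟨1, by omega⟩ : Fin n)) ≤ i.val - 1 := by
          rw [SimpleGraph.dist_comm]
          refine cf_dist_cycle' hn _ i (i.val - 1) ?_
          simp only [Fin.val_mk]
          rw [show 1 + (i.val - 1) = i.val by omega, Nat.mod_eq_of_lt hia]
        have hw := cf_dist_w hn b.val b.isLt
        rw [Fin.eta] at hw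
        have htri : (CF n).dist (Sum.inl i) (Sum.inr (Sum.inr b)) ≤ (i.val - 1) + (b.val + 1) :=
          le_trans ((cf_connected hn).dist_triangle (v := Sum.inl (⟨1, by omega⟩ : Fin n))) (by omega)
        constructor <;> intros <;> omega
    -- lower bound on leaf distance
    have hlow : i.val + m - 1 ≤ (CF n).dist (Sum.inl i) leaf := by
      have hr : (CF n).Reachable leaf (Sum.inl i) := (cf_connected hn).preconnected leaf _
      have h := lip_dist (pot1 n) (pot1_lip hn) hr
      rw [SimpleGraph.dist_comm] at h
      simp only [pot1, hleafdef] at h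
      rw [hleafdef]
      omega
    have hleq : (CF n).dist (Sum.inl i) leaf = i.val + m - 1 := le_antisymm (hub leaf).1 hlow
    have hecc : eccCF n (Sum.inl i) = i.val + m - 1 := by
      refine le_antisymm (Finset.sup_le fun y _ => (hub y).1) ?_
      rw [← hleq]
      exact Finset.le_sup (Finset.mem_univ leaf)
    constructor
    · intro hx
      by_contra hne
      have := (hub x).2 hne
      omega
    · rintro rfl
      rw [hleq, hecc]
  ·  -- second half
    intro i h5 x
    have hia := i.isLt
    have ham : m + 2 ≤ i.val ∧ i.val ≤ 2 * m := by omega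
    set leaf : CFV n := Sum.inr (Sum.inr ⟨n / 2 - 2, by omega⟩) with hleafdef
    have hub : ∀ y : CFV n, ((CF n).dist (Sum.inl i) y ≤ 3 * m + 1 - i.val) ∧
        (y ≠ leaf → (CF n).dist (Sum.inl i) y ≤ 3 * m - i.val) := by
      rintro (c | b | b)
      · have h := cf_dist_half hn i c
        constructor <;> intros <;> omega
      · have hb := b.isLt
        have h0 : (CF n).dist (Sum.inl i) (Sum.inl (⟨0, by omega⟩ : Fin n)) ≤ n - i.val := by
          refine cf_dist_cycle' hn i _ (n - i.val) ?_
          simp only [Fin.val_mk]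
          rw [show i.val + (n - i.val) = n by omega, Nat.mod_self]
        have hv := cf_dist_v hn b.val b.isLt
        rw [Fin.eta] at hv
        have htri : (CF n).dist (Sum.inl i) (Sum.inr (Sum.inl b)) ≤ (n - i.val) + (b.val + 1) :=
          le_trans ((cf_connected hn).dist_triangle (v := Sum.inl (⟨0, by omega⟩ : Fin n))) (by omega)
        constructor <;> intros <;> omega
      · have hb := b.isLt
        have h1 : (CF n).dist (Sum.inl i) (Sum.inl (⟨1, by omega⟩ : Fin n)) ≤ n + 1 - i.val := by
          refine cf_dist_cycle' hn i _ (n + 1 - i.val) ?_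
          simp only [Fin.val_mk]
          rw [show i.val + (n + 1 - i.val) = n + 1 by omega, Nat.add_mod_left,
            Nat.mod_eq_of_lt (by omega)]
        have hw := cf_dist_w hn b.val b.isLt
        rw [Fin.eta] at hw
        have htri : (CF n).dist (Sum.inl i) (Sum.inr (Sum.inr b)) ≤ (n + 1 - i.val) + (b.val + 1) :=
          le_trans ((cf_connected hn).dist_triangle (v := Sum.inl (⟨1, by omega⟩ : Fin n))) (by omega)
        constructor
        · omega
        · intro hne
          have hbv : b.val ≠ n / 2 - 2 := by
            intro h; apply hne; rw [hleafdef]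
            congr 1; congr 1; exact Fin.ext h
          omega
    have hlow : 3 * m + 1 - i.val ≤ (CF n).dist (Sum.inl i) leaf := by
      have hr : (CF n).Reachable leaf (Sum.inl i) := (cf_connected hn).preconnected leaf _
      have h := lip_dist (pot2 n) (pot2_lip hn) hr
      rw [SimpleGraph.dist_comm] at h
      simp only [pot2, hleafdef] at h
      rw [if_neg (by omega)] at h
      rw [hleafdef]
      omega
    have hleq : (CF n).dist (Sum.inl i) leaf = 3 * m + 1 - i.val := le_antisymm (hub leaf).1 hlow
    have hecc : eccCF n (Sum.inl i) = 3 * m + 1 - i.val := by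
      refine le_antisymm (Finset.sup_le fun y _ => (hub y).1) ?_
      rw [← hleq]
      exact Finset.le_sup (Finset.mem_univ leaf)
    constructor
    · intro hx
      by_contra hne
      have := (hub x).2 hne
      omega
    · rintro rfl
      rw [hleq, hecc]
end
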